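/- Fix L ≥ 3, λ > 0, and real numbers h_1,…,h_L with h_l > 0 for all l, h_l < h_{l−1} for l = 2,…,L−1, and h_1 < 1 − (h_1 + ⋯ + h_L). Define T_1 = −(1/λ)·log(1 − h_1/(1 − (h_1 + ⋯ + h_L))), T_l = −(1/λ)·log(1 − h_l/h_{l−1}) for l = 2,…,L−1, and T_L = (1/λ)·log(1 + h_L/h_{L−1}). Then T_l > 0 for all l, and the MCD stationary probabilities computed from these timers recover h: with h_0' = 1/(1 + Σ_{l=1}^{L−1} ∏_{j=1}^{l}(1 − e^{−λ T_j}) + e^{λ T_L} ∏_{j=1}^{L}(1 − e^{−λ T_j})), one has h_0' = 1 − Σ_{l=1}^{L} h_l, h_0' ∏_{j=1}^{l}(1 − e^{−λ T_j}) = h_l for l = 1,…,L−1, and h_0' · e^{λ T_L} · ∏_{j=1}^{L}(1 − e^{−λ T_j}) = h_L. -/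

import Mathlib

/-!
Writing `h_0 = 1 - ∑ h_l`, the timers are chosen so that `1 - e^{-λ T_l} = h_l / h_{l-1}` for
`l < L` and `e^{λ T_L} - 1 = h_L / h_{L-1}`. The products `∏_{j ≤ l} (1 - e^{-λ T_j})` then
telescope to `h_l / h_0`, and since `e^{λ T_L} (1 - e^{-λ T_L}) = e^{λ T_L} - 1`, the last term is
`h_L / h_0`. The normalizing sum is therefore `(h_0 + ∑ h_l) / h_0 = 1 / h_0`.
-/

open Finset Real

theorem mul_prod_Icc_div_pred {K : Type*} [Field K] {g : ℕ → K} {n : ℕ}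
    (hg : ∀ j < n, g j ≠ 0) : g 0 * ∏ j ∈ Icc 1 n, g j / g (j - 1) = g n := by
  induction n with
  | zero => simp
  | succ n ih =>
    rw [prod_Icc_succ_top (by omega), ← mul_assoc, ih fun j hj => hg j (by omega),
      Nat.add_sub_cancel, mul_div_cancel₀ _ (hg n (by omega))]

@[to_additive]
theorem prod_Icc_eq_prod_Icc_pred_mul {M : Type*} [CommMonoid M] (f : ℕ → M) {a n : ℕ}
    (ha : a ≤ n) (hn : 0 < n) : ∏ j ∈ Icc a n, f j = (∏ j ∈ Icc a (n - 1), f j) * f n := by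
  obtain ⟨k, rfl⟩ : ∃ k, n = k + 1 := ⟨n - 1, by omega⟩
  rw [prod_Icc_succ_top ha, Nat.add_sub_cancel]

theorem eq_one_div_one_add_sum_add {K : Type*} [DivisionRing K] {h₀ Q q : K} {P h : ℕ → K}
    {s : Finset ℕ} (hP : ∀ l ∈ s, h₀ * P l = h l) (hQ : h₀ * Q = q)
    (hsum : h₀ + ∑ l ∈ s, h l + q = 1) : h₀ = 1 / (1 + ∑ l ∈ s, P l + Q) := by
  refine eq_one_div_of_mul_eq_one_left ?_
  rwa [mul_add, mul_add, mul_one, mul_sum, sum_congr rfl hP, hQ]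

theorem exp_mul_one_sub_exp_neg (x : ℝ) : exp x * (1 - exp (-x)) = exp x - 1 := by
  rw [mul_sub, mul_one, ← exp_add, add_neg_cancel, exp_zero]

section Timers

variable {lam r : ℝ}

theorem exp_mul_one_div_mul_log (hlam : lam ≠ 0) {x : ℝ} (hx : 0 < x) :
    exp (lam * (1 / lam * log x)) = x := by
  rw [← mul_assoc, mul_one_div_cancel hlam, one_mul, exp_log hx]

theorem one_sub_exp_neg_mul_neg_one_div_mul_log (hlam : lam ≠ 0) (hr : r < 1) :
    1 - exp (-(lam * (-(1 / lam) * log (1 - r)))) = r := by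
  rw [neg_mul, mul_neg, neg_neg, exp_mul_one_div_mul_log hlam (by linarith)]
  ring

theorem exp_mul_one_sub_exp_neg_mul_one_div_mul_log (hlam : lam ≠ 0) (hr : 0 < r) :
    exp (lam * (1 / lam * log (1 + r))) * (1 - exp (-(lam * (1 / lam * log (1 + r))))) = r := by
  rw [exp_mul_one_sub_exp_neg, exp_mul_one_div_mul_log hlam (by linarith), add_sub_cancel_left]

theorem neg_one_div_mul_log_one_sub_pos (hlam : 0 < lam) (hr₀ : 0 < r) (hr₁ : r < 1) :
    0 < -(1 / lam) * log (1 - r) :=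
  mul_pos_of_neg_of_neg (by simpa using hlam) (log_neg (by linarith) (by linarith))

theorem one_div_mul_log_one_add_pos (hlam : 0 < lam) (hr : 0 < r) :
    0 < 1 / lam * log (1 + r) :=
  mul_pos (by positivity) (log_pos (by linarith))

end Timers

section RatioTimers

variable {lam : ℝ} {g T : ℕ → ℝ} {n : ℕ}
  (hpos : ∀ l, 1 ≤ l → l ≤ n → 0 < g l) (hdec : ∀ l, 1 ≤ l → l ≤ n → g l < g (l - 1))
  (hT : ∀ l, 1 ≤ l → l ≤ n → T l = -(1 / lam) * log (1 - g l / g (l - 1)))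
include hpos hdec

theorem ratio_pos_of_decreasing {l : ℕ} (hl₁ : 1 ≤ l) (hl : l ≤ n) : 0 < g l / g (l - 1) :=
  div_pos (hpos l hl₁ hl) ((hpos l hl₁ hl).trans (hdec l hl₁ hl))

theorem ratio_lt_one_of_decreasing {l : ℕ} (hl₁ : 1 ≤ l) (hl : l ≤ n) : g l / g (l - 1) < 1 :=
  (div_lt_one ((hpos l hl₁ hl).trans (hdec l hl₁ hl))).2 (hdec l hl₁ hl)

include hT

theorem timer_pos_of_decreasing (hlam : 0 < lam) {l : ℕ} (hl₁ : 1 ≤ l) (hl : l ≤ n) :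
    0 < T l := by
  rw [hT l hl₁ hl]
  exact neg_one_div_mul_log_one_sub_pos hlam (ratio_pos_of_decreasing hpos hdec hl₁ hl)
    (ratio_lt_one_of_decreasing hpos hdec hl₁ hl)

theorem mul_prod_one_sub_exp_neg_of_decreasing (hlam : lam ≠ 0) {l : ℕ} (hl : l ≤ n) :
    g 0 * ∏ j ∈ Icc 1 l, (1 - exp (-(lam * T j))) = g l := by
  have hfactor : ∀ j ∈ Icc 1 l, 1 - exp (-(lam * T j)) = g j / g (j - 1) := fun j hj => by
    obtain ⟨hj₁, hj⟩ := mem_Icc.1 hj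
    rw [hT j hj₁ (hj.trans hl)]
    exact one_sub_exp_neg_mul_neg_one_div_mul_log hlam
      (ratio_lt_one_of_decreasing hpos hdec hj₁ (hj.trans hl))
  rw [prod_congr rfl hfactor, mul_prod_Icc_div_pred fun j hj => ?_]
  have hj₁ : 1 ≤ j + 1 := le_add_self
  exact ((hpos _ hj₁ (by omega)).trans (hdec _ hj₁ (by omega))).ne'

end RatioTimers

/-- Inverse change of variables for MCD (equation (10) of the paper): given
`h_1, …, h_L > 0` with `h_l < h_{l-1}` for `l = 2, …, L-1` and
`h_1 < 1 - ∑_l h_l`, the timers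
`T_1 = -(1/λ)log(1 - h_1/(1 - ∑_l h_l))`,
`T_l = -(1/λ)log(1 - h_l/h_{l-1})` for `l = 2, …, L-1`, and
`T_L = (1/λ)log(1 + h_L/h_{L-1})` are positive, and the MCD stationary
probabilities computed from them recover `h` (with normalizer
`h_0' = 1 - ∑_{l=1}^{L} h_l`). -/
theorem stmt_16 (L : ℕ) (hL : 3 ≤ L) (lam : ℝ) (hlam : 0 < lam)
    (h : ℕ → ℝ) (hpos : ∀ l, 1 ≤ l → l ≤ L → 0 < h l)
    (hchain : ∀ l, 2 ≤ l → l ≤ L - 1 → h l < h (l - 1))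
    (h1lt : h 1 < 1 - ∑ l ∈ Finset.Icc 1 L, h l)
    (T : ℕ → ℝ)
    (hT1 : T 1 = -(1 / lam) *
        Real.log (1 - h 1 / (1 - ∑ l ∈ Finset.Icc 1 L, h l)))
    (hTl : ∀ l, 2 ≤ l → l ≤ L - 1 →
        T l = -(1 / lam) * Real.log (1 - h l / h (l - 1)))
    (hTL : T L = (1 / lam) * Real.log (1 + h L / h (L - 1)))
    (h0' : ℝ)
    (hh0' : h0' = 1 / (1 + (∑ l ∈ Finset.Icc 1 (L - 1), ∏ j ∈ Finset.Icc 1 l,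
          (1 - Real.exp (-(lam * T j)))) +
        Real.exp (lam * T L) * ∏ j ∈ Finset.Icc 1 L,
          (1 - Real.exp (-(lam * T j))))) :
    (∀ l, 1 ≤ l → l ≤ L → 0 < T l) ∧
    (h0' = 1 - ∑ l ∈ Finset.Icc 1 L, h l) ∧
    (∀ l, 1 ≤ l → l ≤ L - 1 →
      h0' * ∏ j ∈ Finset.Icc 1 l, (1 - Real.exp (-(lam * T j))) = h l) ∧
    (h0' * Real.exp (lam * T L) *
      ∏ j ∈ Finset.Icc 1 L, (1 - Real.exp (-(lam * T j))) = h L) := by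
  set h₀ := 1 - ∑ l ∈ Icc 1 L, h l with hh₀
  -- prepending `h₀` to `h` puts `T 1` in the same form as the middle timers
  obtain ⟨g, hg₀, hg⟩ : ∃ g : ℕ → ℝ, g 0 = h₀ ∧ ∀ l, 1 ≤ l → g l = h l :=
    ⟨fun l => if l = 0 then h₀ else h l, rfl, fun l hl => if_neg (by omega)⟩
  have hg_pos : ∀ l, 1 ≤ l → l ≤ L - 1 → 0 < g l :=
    fun l hl₁ hl => hg l hl₁ ▸ hpos l hl₁ (by omega)
  have hg_pred : ∀ l, 1 ≤ l → l ≤ L - 1 →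
      g l < g (l - 1) ∧ T l = -(1 / lam) * log (1 - g l / g (l - 1)) := fun l hl₁ hl => by
    rcases Nat.lt_or_ge l 2 with hl₂ | hl₂
    · obtain rfl : l = 1 := by omega
      rw [hg 1 le_rfl, Nat.sub_self, hg₀]
      exact ⟨h1lt, hT1⟩
    · rw [hg l hl₁, hg (l - 1) (by omega)]
      exact ⟨hchain l hl₂ hl, hTl l hl₂ hl⟩
  have hdec := fun l hl₁ hl => (hg_pred l hl₁ hl).1
  have hTg := fun l hl₁ hl => (hg_pred l hl₁ hl).2
  have hprod : ∀ l, 1 ≤ l → l ≤ L - 1 → h₀ * ∏ j ∈ Icc 1 l, (1 - exp (-(lam * T j))) = h l :=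
    fun l hl₁ hl => by
      rw [← hg₀, mul_prod_one_sub_exp_neg_of_decreasing hg_pos hdec hTg hlam.ne' hl, hg l hl₁]
  have hhL : 0 < h L / h (L - 1) :=
    div_pos (hpos L (by omega) le_rfl) (hpos (L - 1) (by omega) (by omega))
  have hlast : h₀ * (exp (lam * T L) * ∏ j ∈ Icc 1 L, (1 - exp (-(lam * T j)))) = h L :=
    calc _ = (h₀ * ∏ j ∈ Icc 1 (L - 1), (1 - exp (-(lam * T j)))) *
          (exp (lam * T L) * (1 - exp (-(lam * T L)))) := by
          rw [prod_Icc_eq_prod_Icc_pred_mul _ (by omega) (by omega)]; ring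
      _ = h (L - 1) * (h L / h (L - 1)) := by
        rw [hprod _ (by omega) le_rfl, hTL,
          exp_mul_one_sub_exp_neg_mul_one_div_mul_log hlam.ne' hhL]
      _ = h L := mul_div_cancel₀ _ (hpos _ (by omega) (by omega)).ne'
  have hnorm : h0' = h₀ := by
    refine hh0'.trans (eq_one_div_one_add_sum_add
      (fun l hl => hprod l (mem_Icc.1 hl).1 (mem_Icc.1 hl).2) hlast ?_).symm
    rw [add_assoc, ← sum_Icc_eq_sum_Icc_pred_add _ (by omega) (by omega), hh₀, sub_add_cancel]
  refine ⟨fun l hl₁ hl => ?_, hnorm, fun l hl₁ hl => hnorm ▸ hprod l hl₁ hl, ?_⟩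
  · rcases eq_or_lt_of_le hl with rfl | hlt
    · rw [hTL]; exact one_div_mul_log_one_add_pos hlam hhL
    · exact timer_pos_of_decreasing hg_pos hdec hTg hlam hl₁ (by omega)
  · rw [hnorm, mul_assoc, hlast]
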